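/- Let k = 2 and consider the radial ODE boundary value problem u'' = (1/4)·W'(u) on [R, ∞) with u(R) = 1 and u(ρ) → 0 as ρ → ∞, where W(s) = 2s² − 2s⁴ + s⁶. Then u(ρ) = √2 / √(1 + cosh(2(ρ − R)) + √2·sinh(2(ρ − R))) is a solution, and it satisfies u(ρ)·e^{ρ − R} → 2/√(1 + √2) as ρ → ∞. -/

import Mathlib

/-!
Write `t = ρ - R` and `G = 1 + cosh 2t + √2 sinh 2t`, so that `u = √2 / √G`. The function `G`
satisfies `G'' = 4(G - 1)` and `G'² = 4(G² - 2G + 2)`, while for any `G > 0`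
`(c / √G)'' = c (3G'² - 2GG'') / (4G²√G)`; substituting the two identities turns this into
`u - 2u³ + (3/2)u⁵`. The asymptotics follow from `G e^{-2t} → (1 + √2)/2`.

The ODE is claimed for every `ρ`, also where `G ≤ 0` (for `t` very negative): there `u = 0`
because `√x = 0` for `x ≤ 0`, and both sides vanish; at the zero of `G` this is because `u'`
tends to `-∞` from the right, so `deriv (deriv u)` takes the junk value `0`.
-/

open Real Filter Topology

theorem deriv_eq_zero_of_tendsto_nhdsGT_atBot {f : ℝ → ℝ} {x : ℝ}
    (h : Tendsto f (𝓝[>] x) atBot) : deriv f x = 0 := by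
  refine deriv_zero_of_not_differentiableAt fun hf => ?_
  exact not_tendsto_atBot_of_tendsto_nhds
    (hf.continuousAt.continuousWithinAt (s := Set.Ioi x)).tendsto h

theorem hasDerivAt_div_sqrt {g : ℝ → ℝ} {g' x : ℝ} (c : ℝ) (hg : HasDerivAt g g' x)
    (hx : 0 < g x) :
    HasDerivAt (fun y => c / √(g y)) (-(c * g') / (2 * g x * √(g x))) x := by
  have hs : 0 < √(g x) := sqrt_pos.mpr hx
  refine ((hasDerivAt_const x c).div (hg.sqrt hx.ne') hs.ne').congr_deriv ?_
  rw [sq_sqrt hx.le]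
  field_simp
  ring

theorem hasDerivAt_neg_mul_div_mul_sqrt {g g' : ℝ → ℝ} {g'' x : ℝ} (c : ℝ)
    (hg : HasDerivAt g (g' x) x) (hg' : HasDerivAt g' g'' x) (hx : 0 < g x) :
    HasDerivAt (fun y => -(c * g' y) / (2 * g y * √(g y)))
      (c * (3 * g' x ^ 2 - 2 * g x * g'') / (4 * g x ^ 2 * √(g x))) x := by
  have hs : 0 < √(g x) := sqrt_pos.mpr hx
  have hs2 : √(g x) ^ 2 = g x := sq_sqrt hx.le
  have hnum : HasDerivAt (fun y => -(c * g' y)) (-(c * g'')) x := (hg'.const_mul c).neg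
  have hden : HasDerivAt (fun y => 2 * g y * √(g y))
      (2 * g' x * √(g x) + 2 * g x * (g' x / (2 * √(g x)))) x :=
    (hg.const_mul 2).mul (hg.sqrt hx.ne')
  refine (hnum.div hden (mul_pos (mul_pos two_pos hx) hs).ne').congr_deriv ?_
  generalize √(g x) = s at hs hs2 ⊢
  rw [← hs2]
  field_simp
  ring

theorem deriv_deriv_div_sqrt {g g' : ℝ → ℝ} {g'' x : ℝ} (c : ℝ)
    (hg : ∀ y, HasDerivAt g (g' y) y) (hg' : HasDerivAt g' g'' x) (hx : 0 < g x) :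
    deriv (deriv fun y => c / √(g y)) x
      = c * (3 * g' x ^ 2 - 2 * g x * g'') / (4 * g x ^ 2 * √(g x)) := by
  have hpos : ∀ᶠ y in 𝓝 x, 0 < g y := (hg x).continuousAt.eventually (lt_mem_nhds hx)
  have hderiv :
      deriv (fun y => c / √(g y)) =ᶠ[𝓝 x] fun y => -(c * g' y) / (2 * g y * √(g y)) := by
    filter_upwards [hpos] with y hy
    exact (hasDerivAt_div_sqrt c (hg y) hy).deriv
  rw [hderiv.deriv_eq]
  exact (hasDerivAt_neg_mul_div_mul_sqrt c (hg x) hg' hx).deriv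

theorem tendsto_deriv_div_sqrt_nhdsGT_atBot {g g' : ℝ → ℝ} {x c : ℝ} (hc : 0 < c)
    (hg : ∀ y, HasDerivAt g (g' y) y) (hg' : ContinuousAt g' x) (hmono : StrictMono g)
    (hx : g x = 0) (hg'x : 0 < g' x) :
    Tendsto (deriv fun y => c / √(g y)) (𝓝[>] x) atBot := by
  have hpos : ∀ y ∈ Set.Ioi x, 0 < g y := fun y hy => hx ▸ hmono hy
  have hderiv : (fun y => -(c * g' y) * (2 * g y * √(g y))⁻¹) =ᶠ[𝓝[>] x]
      deriv fun y => c / √(g y) := by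
    filter_upwards [self_mem_nhdsWithin] with y hy
    rw [(hasDerivAt_div_sqrt c (hg y) (hpos y hy)).deriv, div_eq_mul_inv]
  have hden : Tendsto (fun y => 2 * g y * √(g y)) (𝓝[>] x) (𝓝[>] 0) := by
    refine tendsto_nhdsWithin_of_tendsto_nhds_of_eventually_within _ ?_ ?_
    · have hcont : ContinuousAt (fun y => 2 * g y * √(g y)) x :=
        (continuousAt_const.mul (hg x).continuousAt).mul (hg x).continuousAt.sqrt
      simpa [hx] using hcont.continuousWithinAt.tendsto (s := Set.Ioi x)
    · filter_upwards [self_mem_nhdsWithin] with y hy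
      have := hpos y hy
      exact (by positivity : 0 < 2 * g y * √(g y))
  refine Tendsto.congr' hderiv (Tendsto.neg_mul_atTop (by nlinarith : -(c * g' x) < 0) ?_
    (tendsto_inv_nhdsGT_zero.comp hden))
  exact ((continuousAt_const.mul hg').neg).continuousWithinAt.tendsto

theorem deriv_deriv_div_sqrt_of_nonpos {g g' : ℝ → ℝ} {x c : ℝ} (hc : 0 < c)
    (hg : ∀ y, HasDerivAt g (g' y) y) (hg' : ContinuousAt g' x) (hmono : StrictMono g)
    (hg'x : 0 < g' x) (hx : g x ≤ 0) :
    deriv (deriv fun y => c / √(g y)) x = 0 := by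
  rcases hx.lt_or_eq with hneg | hzero
  · have hvanish : (fun y => c / √(g y)) =ᶠ[𝓝 x] fun _ => 0 := by
      filter_upwards [(hg x).continuousAt.eventually (gt_mem_nhds hneg)] with y hy
      rw [sqrt_eq_zero_of_nonpos hy.le, div_zero]
    have hderiv : deriv (fun y => c / √(g y)) =ᶠ[𝓝 x] fun _ => 0 := by
      filter_upwards [hvanish.eventuallyEq_nhds] with y hy
      rw [hy.deriv_eq, deriv_const]
    rw [hderiv.deriv_eq, deriv_const]
  · exact deriv_eq_zero_of_tendsto_nhdsGT_atBot
      (tendsto_deriv_div_sqrt_nhdsGT_atBot hc hg hg' hmono hzero hg'x)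

theorem div_sqrt_ode_identity {g g' g'' : ℝ} (hg : 0 < g)
    (hg' : g' ^ 2 = 4 * (g ^ 2 - 2 * g + 2)) (hg'' : g'' = 4 * (g - 1)) :
    √2 * (3 * g' ^ 2 - 2 * g * g'') / (4 * g ^ 2 * √g)
      = 1 / 4 * (4 * (√2 / √g) - 8 * (√2 / √g) ^ 3 + 6 * (√2 / √g) ^ 5) := by
  have hs : 0 < √g := sqrt_pos.mpr hg
  have hs2 : √g ^ 2 = g := sq_sqrt hg.le
  have h2 : √2 ^ 2 = 2 := sq_sqrt zero_le_two
  rw [hg', hg'']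
  generalize √g = s at hs hs2 ⊢
  subst hs2
  field_simp
  linear_combination (8 * s ^ 2 - 6 * (√2 ^ 2 + 2)) * h2

theorem sqrt_mul_exp_neg_two_mul (b t : ℝ) : √(b * exp (-(2 * t))) = √b * exp (-t) := by
  rw [sqrt_mul' _ (exp_nonneg _), ← sqrt_sq (exp_nonneg (-t)), ← exp_nat_mul]
  norm_num

noncomputable def denom (R ρ : ℝ) : ℝ :=
  1 + cosh (2 * (ρ - R)) + √2 * sinh (2 * (ρ - R))

noncomputable def denomDeriv (R ρ : ℝ) : ℝ :=
  2 * sinh (2 * (ρ - R)) + 2 * √2 * cosh (2 * (ρ - R))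

theorem hasDerivAt_two_mul_sub (R ρ : ℝ) : HasDerivAt (fun ρ : ℝ => 2 * (ρ - R)) 2 ρ := by
  simpa using ((hasDerivAt_id ρ).sub_const R).const_mul 2

theorem hasDerivAt_denom (R ρ : ℝ) : HasDerivAt (denom R) (denomDeriv R ρ) ρ := by
  have hc := (hasDerivAt_cosh _).comp ρ (hasDerivAt_two_mul_sub R ρ)
  have hs := (hasDerivAt_sinh _).comp ρ (hasDerivAt_two_mul_sub R ρ)
  refine ((hc.const_add 1).add (hs.const_mul √2)).congr_deriv ?_
  simp only [denomDeriv]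
  ring

theorem hasDerivAt_denomDeriv (R ρ : ℝ) :
    HasDerivAt (denomDeriv R) (4 * (denom R ρ - 1)) ρ := by
  have hc := (hasDerivAt_cosh _).comp ρ (hasDerivAt_two_mul_sub R ρ)
  have hs := (hasDerivAt_sinh _).comp ρ (hasDerivAt_two_mul_sub R ρ)
  refine ((hs.const_mul 2).add (hc.const_mul (2 * √2))).congr_deriv ?_
  simp only [denom]
  ring

theorem denomDeriv_sq (R ρ : ℝ) :
    denomDeriv R ρ ^ 2 = 4 * (denom R ρ ^ 2 - 2 * denom R ρ + 2) := by
  have h2 : √2 ^ 2 = 2 := sq_sqrt zero_le_two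
  simp only [denom, denomDeriv]
  linear_combination (4 : ℝ) * cosh_sq (2 * (ρ - R))
    + 4 * (cosh (2 * (ρ - R)) ^ 2 - sinh (2 * (ρ - R)) ^ 2) * h2

theorem denomDeriv_pos (R ρ : ℝ) : 0 < denomDeriv R ρ := by
  have hc := cosh_pos (2 * (ρ - R))
  have h1 : 1 < √2 := by rw [lt_sqrt zero_le_one]; norm_num
  -- `sinh + √2 cosh > sinh + cosh = exp`
  have hexp := exp_pos (2 * (ρ - R))
  rw [← cosh_add_sinh] at hexp
  simp only [denomDeriv]
  nlinarith

theorem strictMono_denom (R : ℝ) : StrictMono (denom R) :=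
  strictMono_of_hasDerivAt_pos (hasDerivAt_denom R) (denomDeriv_pos R)

theorem denom_self (R : ℝ) : denom R R = 2 := by
  norm_num [denom]

theorem denom_mul_exp (R ρ : ℝ) :
    denom R ρ * exp (-(2 * (ρ - R))) = (1 + √2) / 2 + exp (-(2 * (ρ - R)))
      + (1 - √2) / 2 * exp (-(2 * (ρ - R))) ^ 2 := by
  simp only [denom, cosh_eq, sinh_eq, exp_neg]
  field_simp
  ring

theorem tendsto_denom_mul_exp (R : ℝ) :
    Tendsto (fun ρ => denom R ρ * exp (-(2 * (ρ - R)))) atTop (𝓝 ((1 + √2) / 2)) := by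
  have hexp : Tendsto (fun ρ : ℝ => exp (-(2 * (ρ - R)))) atTop (𝓝 0) :=
    tendsto_exp_atBot.comp (tendsto_neg_atTop_atBot.comp
      ((tendsto_atTop_add_const_right _ (-R) tendsto_id).const_mul_atTop two_pos))
  simp only [denom_mul_exp]
  simpa using (tendsto_const_nhds.add hexp).add ((hexp.pow 2).const_mul ((1 - √2) / 2))

/-- The explicit solution of the radial ODE `u'' = (1/4)W'(u)` on `[R,∞)` with `u(R) = 1`,
`u(∞) = 0`, where `W(s) = 2s² − 2s⁴ + s⁶` (so `W'(s) = 4s − 8s³ + 6s⁵`):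
`u(ρ) = √2/√(1 + cosh(2(ρ−R)) + √2 sinh(2(ρ−R)))` solves it, and
`u(ρ)e^{ρ−R} → 2/√(1+√2)` as `ρ → ∞`. -/
theorem stmt19 (R : ℝ) (u : ℝ → ℝ)
    (hu : ∀ ρ : ℝ, u ρ = Real.sqrt 2 /
      Real.sqrt (1 + Real.cosh (2 * (ρ - R)) + Real.sqrt 2 * Real.sinh (2 * (ρ - R)))) :
    u R = 1 ∧
    (∀ ρ : ℝ, deriv (deriv u) ρ = (1 / 4) * (4 * u ρ - 8 * (u ρ) ^ 3 + 6 * (u ρ) ^ 5)) ∧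
    Tendsto u atTop (nhds 0) ∧
    Tendsto (fun ρ => u ρ * Real.exp (ρ - R)) atTop
      (nhds (2 / Real.sqrt (1 + Real.sqrt 2))) := by
  obtain rfl : u = fun ρ => √2 / √(denom R ρ) := funext hu
  have hlim : Tendsto (fun ρ => √2 / √(denom R ρ) * exp (ρ - R)) atTop
      (𝓝 (2 / √(1 + √2))) := by
    have hconst : √2 / √((1 + √2) / 2) = 2 / √(1 + √2) := by
      rw [sqrt_div' _ zero_le_two, div_div_eq_mul_div, mul_self_sqrt zero_le_two]
    have h : Tendsto (fun ρ => √2 / √(denom R ρ * exp (-(2 * (ρ - R))))) atTop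
        (𝓝 (√2 / √((1 + √2) / 2))) :=
      tendsto_const_nhds.div ((continuous_sqrt.tendsto _).comp (tendsto_denom_mul_exp R))
        (by positivity)
    refine hconst ▸ h.congr fun ρ => ?_
    rw [sqrt_mul_exp_neg_two_mul, exp_neg, ← div_div, div_inv_eq_mul]
  refine ⟨by simp [denom_self], fun ρ => ?_, ?_, hlim⟩
  · rcases le_or_gt (denom R ρ) 0 with hneg | hpos
    · simp only [sqrt_eq_zero_of_nonpos hneg, div_zero]
      rw [deriv_deriv_div_sqrt_of_nonpos (sqrt_pos.mpr two_pos) (hasDerivAt_denom R)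
        (hasDerivAt_denomDeriv R ρ).continuousAt (strictMono_denom R) (denomDeriv_pos R ρ) hneg]
      ring
    · rw [deriv_deriv_div_sqrt √2 (hasDerivAt_denom R) (hasDerivAt_denomDeriv R ρ) hpos]
      exact div_sqrt_ode_identity hpos (denomDeriv_sq R ρ) rfl
  · have hdecay : Tendsto (fun ρ => exp (-(ρ - R))) atTop (𝓝 0) :=
      tendsto_exp_atBot.comp
        (tendsto_neg_atTop_atBot.comp (tendsto_atTop_add_const_right _ (-R) tendsto_id))
    simpa [mul_assoc, ← exp_add] using hlim.mul hdecay
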